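/- Let (Ω, ℙ) be a probability space and X : Ω → ℝ^D a square-integrable random vector with mean μ = E[X] and Cov(X) = V · diag(s) · Vᵀ, where V ∈ ℝ^{D×D} is orthogonal and s ∈ ℝ^D has nonnegative entries. Let T ⊆ {1,…,D} with |T| = r be a set of indices with s_i > 0 for every i ∈ T, let V̂ ∈ ℝ^{D×r} be the submatrix of V formed by the columns indexed by T, and set Z = V̂V̂ᵀ(X − μ) + μ. Then for every matrix P ∈ ℝ^{D×D}: (i) Cov(PX, Z) = P · Cov(X) · V̂V̂ᵀ, and (ii) Cov(PX, Z) = 0 if and only if P·V̂ = 0. -/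

import Mathlib

open MeasureTheory Matrix

/-- Componentwise mean of a random vector. -/
noncomputable def vecMean {Ω : Type*} [MeasureSpace Ω] {D : ℕ} (X : Ω → Fin D → ℝ) :
    Fin D → ℝ := fun i => ∫ ω, X ω i

/-- Cross-covariance matrix `Cov(Y,Z)ᵢⱼ = E[(Yᵢ − E[Yᵢ])(Zⱼ − E[Zⱼ])]`. -/
noncomputable def crossCov {Ω : Type*} [MeasureSpace Ω] {m n : ℕ}
    (Y : Ω → Fin m → ℝ) (Z : Ω → Fin n → ℝ) : Matrix (Fin m) (Fin n) ℝ :=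
  Matrix.of fun i j => ∫ ω, (Y ω i - vecMean Y i) * (Z ω j - vecMean Z j)

/-! `Z` is an affine function of `X`, so by bilinearity `Cov(PX, Z) = P·Cov(X)·(V̂V̂ᵀ)ᵀ`, and
`V̂V̂ᵀ` is symmetric. The columns of `V̂` are eigenvectors of `Cov(X)`: `Cov(X)·V̂ = V̂·Ŝ` with
`Ŝ = diag(s_i)_{i ∈ T}` invertible. Hence `Cov(PX, Z) = P·V̂·Ŝ·V̂ᵀ`, and since `V̂ᵀV̂ = 1`,
multiplying on the right by `V̂·Ŝ⁻¹` shows that this vanishes only if `P·V̂ = 0`. -/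

namespace Matrix

variable {R : Type*} [CommRing R] {m n : Type*} [Fintype m]

theorem transpose_submatrix_mul_submatrix_of_transpose_mul_self [DecidableEq m]
    [DecidableEq n] {V : Matrix m m R} (hV : Vᵀ * V = 1) {f : n → m} (hf : f.Injective) :
    (V.submatrix id f)ᵀ * V.submatrix id f = 1 := by
  rw [transpose_submatrix, ← submatrix_mul _ _ _ _ _ Function.bijective_id, hV,
    submatrix_one f hf]

theorem mul_submatrix_eq_submatrix_mul_diagonal [DecidableEq m] [Fintype n] [DecidableEq n]
    {V : Matrix m m R} (hV : Vᵀ * V = 1) (s : m → R) (f : n → m) :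
    V * diagonal s * Vᵀ * V.submatrix id f = V.submatrix id f * diagonal (s ∘ f) := by
  have hcols : Vᵀ * V.submatrix id f = (1 : Matrix m m R).submatrix id f := by
    rw [← hV, submatrix_mul _ _ _ _ _ Function.bijective_id, submatrix_id_id]
  rw [Matrix.mul_assoc, hcols]
  ext i k
  simp [mul_apply, one_apply, diagonal_apply]

theorem mul_mul_transpose_eq_zero_iff [Fintype n] [DecidableEq n] {l : Type*}
    {P : Matrix l m R} {W : Matrix m n R} (hW : Wᵀ * W = 1) {A : Matrix n n R} (hA : IsUnit A) :
    P * (W * A * Wᵀ) = 0 ↔ P * W = 0 := by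
  refine ⟨fun h ↦ ?_, fun h ↦ by rw [← Matrix.mul_assoc, ← Matrix.mul_assoc, h,
    Matrix.zero_mul, Matrix.zero_mul]⟩
  have hPWA : P * W * A = 0 := by
    calc P * W * A = P * (W * A * Wᵀ) * W := by
          simp only [Matrix.mul_assoc, hW, Matrix.mul_one]
      _ = 0 := by rw [h, Matrix.zero_mul]
  calc P * W = P * W * A * A⁻¹ := by
        rw [Matrix.mul_assoc, mul_nonsing_inv A ((isUnit_iff_isUnit_det A).mp hA),
          Matrix.mul_one]
    _ = 0 := by rw [hPWA, Matrix.zero_mul]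

end Matrix

section Covariance

variable {Ω : Type*} [MeasureSpace Ω] [IsProbabilityMeasure (volume : Measure Ω)]
  {k m n : ℕ}

theorem vecMean_mulVec_add {X : Ω → Fin m → ℝ} (hX : ∀ i, Integrable (fun ω ↦ X ω i))
    (A : Matrix (Fin k) (Fin m) ℝ) (c : Fin k → ℝ) :
    vecMean (fun ω ↦ A *ᵥ X ω + c) = A *ᵥ vecMean X + c := by
  ext i
  simp only [vecMean, Pi.add_apply, mulVec, dotProduct]
  rw [integral_add (integrable_finsetSum _ fun j _ ↦ (hX j).const_mul _) (integrable_const _),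
    integral_finsetSum _ fun j _ ↦ (hX j).const_mul _]
  simp [integral_const_mul]

theorem sub_vecMean_mulVec_add {X : Ω → Fin m → ℝ} (hX : ∀ i, Integrable (fun ω ↦ X ω i))
    (A : Matrix (Fin k) (Fin m) ℝ) (c : Fin k → ℝ) (ω : Ω) :
    A *ᵥ X ω + c - vecMean (fun ω ↦ A *ᵥ X ω + c) = A *ᵥ (X ω - vecMean X) := by
  rw [vecMean_mulVec_add hX, mulVec_sub, add_sub_add_right_eq_sub]

theorem crossCov_mulVec_add {k' : ℕ} {X : Ω → Fin m → ℝ} {Y : Ω → Fin n → ℝ}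
    (hX : ∀ i, MemLp (fun ω ↦ X ω i) 2) (hY : ∀ j, MemLp (fun ω ↦ Y ω j) 2)
    (A : Matrix (Fin k) (Fin m) ℝ) (a : Fin k → ℝ) (B : Matrix (Fin k') (Fin n) ℝ)
    (b : Fin k' → ℝ) :
    crossCov (fun ω ↦ A *ᵥ X ω + a) (fun ω ↦ B *ᵥ Y ω + b) = A * crossCov X Y * Bᵀ := by
  have hprod : ∀ p q, Integrable
      (fun ω ↦ (X ω p - vecMean X p) * (Y ω q - vecMean Y q)) := fun p q ↦
    ((hX p).sub (memLp_const _)).integrable_mul ((hY q).sub (memLp_const _))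
  ext i j
  calc crossCov (fun ω ↦ A *ᵥ X ω + a) (fun ω ↦ B *ᵥ Y ω + b) i j
      = ∫ ω, ∑ p, ∑ q, A i p * B j q * ((X ω p - vecMean X p) * (Y ω q - vecMean Y q)) := by
        refine integral_congr_ae (Filter.Eventually.of_forall fun ω ↦ ?_)
        have hA := congrFun
          (sub_vecMean_mulVec_add (fun p ↦ (hX p).integrable one_le_two) A a ω) i
        have hB := congrFun
          (sub_vecMean_mulVec_add (fun q ↦ (hY q).integrable one_le_two) B b ω) j
        rw [Pi.sub_apply] at hA hB
        simp only [hA, hB, mulVec, dotProduct, Pi.sub_apply, Finset.sum_mul_sum]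
        exact Finset.sum_congr rfl fun p _ ↦ Finset.sum_congr rfl fun q _ ↦ by ring
    _ = ∑ p, ∑ q, A i p * B j q * crossCov X Y p q := by
        rw [integral_finsetSum _ fun p _ ↦ integrable_finsetSum _ fun q _ ↦
          (hprod p q).const_mul _]
        refine Finset.sum_congr rfl fun p _ ↦ ?_
        rw [integral_finsetSum _ fun q _ ↦ (hprod p q).const_mul _]
        exact Finset.sum_congr rfl fun q _ ↦ integral_const_mul _ _
    _ = (A * crossCov X Y * Bᵀ) i j := by
        simp only [mul_apply, transpose_apply, Finset.sum_mul]
        rw [Finset.sum_comm]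
        exact Finset.sum_congr rfl fun q _ ↦ Finset.sum_congr rfl fun p _ ↦ by ring

end Covariance

theorem crossCov_vanishes_iff_kills_columns_general
    {Ω : Type*} [MeasureSpace Ω] [IsProbabilityMeasure (volume : Measure Ω)]
    {D r : ℕ}
    (X : Ω → Fin D → ℝ)
    (hX : ∀ i, MemLp (fun ω => X ω i) 2 volume)
    (μ : Fin D → ℝ)
    (V : Matrix (Fin D) (Fin D) ℝ) (hV : Vᵀ * V = 1)
    (s : Fin D → ℝ)
    (hCovX : crossCov X X = V * Matrix.diagonal s * Vᵀ)
    (f : Fin r → Fin D) (hf : Function.Injective f)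
    (hfs : ∀ k, 0 < s (f k))
    (Vhat : Matrix (Fin D) (Fin r) ℝ) (hVhat : Vhat = V.submatrix id f)
    (Z : Ω → Fin D → ℝ)
    (hZ : ∀ ω, Z ω = (Vhat * Vhatᵀ).mulVec (X ω - μ) + μ) :
    ∀ P : Matrix (Fin D) (Fin D) ℝ,
      crossCov (fun ω => P.mulVec (X ω)) Z = P * crossCov X X * (Vhat * Vhatᵀ) ∧
      (crossCov (fun ω => P.mulVec (X ω)) Z = 0 ↔ P * Vhat = 0) := by
  intro P
  have hZ_affine : Z = fun ω ↦ (Vhat * Vhatᵀ) *ᵥ X ω + (μ - (Vhat * Vhatᵀ) *ᵥ μ) := by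
    funext ω
    rw [hZ, mulVec_sub]
    abel
  have hcov : crossCov (fun ω ↦ P *ᵥ X ω) Z = P * crossCov X X * (Vhat * Vhatᵀ) := by
    have := crossCov_mulVec_add hX hX P 0 (Vhat * Vhatᵀ) (μ - (Vhat * Vhatᵀ) *ᵥ μ)
    simpa only [add_zero, ← hZ_affine, transpose_mul, transpose_transpose] using this
  have hcov_cols : crossCov X X * (Vhat * Vhatᵀ) = Vhat * diagonal (s ∘ f) * Vhatᵀ := by
    rw [hCovX, ← Matrix.mul_assoc, hVhat, mul_submatrix_eq_submatrix_mul_diagonal hV]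
  have hdiag : IsUnit (diagonal (s ∘ f)) :=
    isUnit_diagonal.mpr (Pi.isUnit_iff.mpr fun k ↦ (hfs k).ne'.isUnit)
  refine ⟨hcov, ?_⟩
  rw [hcov, Matrix.mul_assoc, hcov_cols]
  exact mul_mul_transpose_eq_zero_iff
    (hVhat ▸ transpose_submatrix_mul_submatrix_of_transpose_mul_self hV hf) hdiag

/-- For `Z = V̂V̂ᵀ(X − μ) + μ`, every matrix `P` satisfies
(i) `Cov(PX, Z) = P·Cov(X)·V̂V̂ᵀ`, and (ii) `Cov(PX, Z) = 0 ↔ P·V̂ = 0`. -/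
theorem crossCov_vanishes_iff_kills_columns
    {Ω : Type*} [MeasureSpace Ω] [IsProbabilityMeasure (volume : Measure Ω)]
    {D r : ℕ}
    (X : Ω → Fin D → ℝ)
    (hX : ∀ i, MemLp (fun ω => X ω i) 2 volume)
    (μ : Fin D → ℝ) (hμ : μ = vecMean X)
    (V : Matrix (Fin D) (Fin D) ℝ) (hV : Vᵀ * V = 1)
    (s : Fin D → ℝ) (hs : ∀ i, 0 ≤ s i)
    (hCovX : crossCov X X = V * Matrix.diagonal s * Vᵀ)
    (f : Fin r → Fin D) (hf : Function.Injective f)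
    (hfs : ∀ k, 0 < s (f k))
    (Vhat : Matrix (Fin D) (Fin r) ℝ) (hVhat : Vhat = V.submatrix id f)
    (Z : Ω → Fin D → ℝ)
    (hZ : ∀ ω, Z ω = (Vhat * Vhatᵀ).mulVec (X ω - μ) + μ) :
    ∀ P : Matrix (Fin D) (Fin D) ℝ,
      crossCov (fun ω => P.mulVec (X ω)) Z = P * crossCov X X * (Vhat * Vhatᵀ) ∧
      (crossCov (fun ω => P.mulVec (X ω)) Z = 0 ↔ P * Vhat = 0) :=
  crossCov_vanishes_iff_kills_columns_general X hX μ V hV s hCovX f hf hfs Vhat hVhat Z hZ
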